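/- arXiv:1902.00652 — 2 statements merged into one kernel-verified Lean document; each statement's English description precedes it below -/
import Mathlib

section
/- If D : ℕ → ℝ≥0 is a nondecreasing function satisfying D(n) ≤ C·n²·D(ℓ(n)) for all n ≥ N (where ℓ : ℕ → ℕ is a function, C > 0), and both the lower bound p(n) = n^d and upper bound q(n) = n^d hold coarsely for D with d > 2, then n^((d-2)/d) ⪯ ℓ, i.e., there exist constants C', K, M, N' such that n^((d-2)/d) ≤ C'·K·ℓ(M·n) for all n ≥ N'. -/
/-- If a nondecreasing Dehn-type function `D` satisfies `D n ≤ C * n ^ 2 * D (ℓ n)`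
for `n ≥ N`, and `D` is coarsely bounded below and above by `n ^ d` with `d > 2`,
then `n ^ ((d - 2) / d)` is coarsely bounded above by `ℓ`. -/
theorem rpow_coarseLE_of_dehn (D : ℕ → ℝ) (ℓ : ℕ → ℕ) (C : ℝ) (N : ℕ) (d : ℝ)
    (hDmono : Monotone D) (hDnn : ∀ n, 0 ≤ D n) (hC : 0 < C) (hd : 2 < d)
    (hrec : ∀ n, N ≤ n → D n ≤ C * (n : ℝ) ^ 2 * D (ℓ n))
    (hlow : ∃ N₁ K₁ M₁ : ℕ, 0 < K₁ ∧ 0 < M₁ ∧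
      ∀ n, N₁ ≤ n → (n : ℝ) ^ d ≤ (K₁ : ℝ) * D (M₁ * n))
    (hupp : ∃ N₂ K₂ M₂ : ℕ, 0 < K₂ ∧ 0 < M₂ ∧
      ∀ n, N₂ ≤ n → D n ≤ (K₂ : ℝ) * ((M₂ * n : ℕ) : ℝ) ^ d) :
    ∃ N' K M : ℕ, 0 < K ∧ 0 < M ∧
      ∀ n, N' ≤ n → (n : ℝ) ^ ((d - 2) / d) ≤ (K : ℝ) * (ℓ (M * n) : ℝ) := by
  obtain ⟨N₁, K₁, M₁, hK₁, hM₁, h1⟩ := hlow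
  obtain ⟨N₂, K₂, M₂, hK₂, hM₂, h2⟩ := hupp
  have hd2 : (0:ℝ) < d - 2 := by linarith
  have hdpos : (0:ℝ) < d := by linarith
  set A : ℝ := (K₁ : ℝ) * C * (M₁ : ℝ) ^ 2 * (K₂ : ℝ) * (M₂ : ℝ) ^ d with hA
  have hM₁R : (0:ℝ) < (M₁ : ℝ) := by exact_mod_cast hM₁
  have hM₂R : (0:ℝ) < (M₂ : ℝ) := by exact_mod_cast hM₂
  have hK₁R : (0:ℝ) < (K₁ : ℝ) := by exact_mod_cast hK₁
  have hK₂R : (0:ℝ) < (K₂ : ℝ) := by exact_mod_cast hK₂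
  have hApos : 0 < A := by positivity
  set B : ℝ := (K₁ : ℝ) * C * (M₁ : ℝ) ^ 2 * D N₂ with hB
  have hBnn : 0 ≤ B := by
    have := hDnn N₂; positivity
  refine ⟨max (max N₁ N) (max 1 (⌈B ^ (d-2)⁻¹⌉₊ + 1)), ⌈A ^ d⁻¹⌉₊ + 1, M₁,
    Nat.succ_pos _, hM₁, ?_⟩
  intro n hn
  have hn1 : N₁ ≤ n := le_trans (le_trans (le_max_left _ _) (le_max_left _ _)) hn
  have hnN : N ≤ n := le_trans (le_trans (le_max_right _ _) (le_max_left _ _)) hn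
  have hn2 : 1 ≤ n := le_trans (le_trans (le_max_left _ _) (le_max_right _ _)) hn
  have hn3 : ⌈B ^ (d-2)⁻¹⌉₊ + 1 ≤ n :=
    le_trans (le_trans (le_max_right _ _) (le_max_right _ _)) hn
  have hnR : (1:ℝ) ≤ (n:ℝ) := by exact_mod_cast hn2
  have hnpos : (0:ℝ) < (n:ℝ) := by linarith
  -- B < n^(d-2)
  have hBlt : B < (n:ℝ) ^ (d - 2) := by
    have h' : B ^ (d-2)⁻¹ < (n:ℝ) := by
      calc B ^ (d-2)⁻¹ ≤ (⌈B ^ (d-2)⁻¹⌉₊ : ℝ) := Nat.le_ceil _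
        _ < (⌈B ^ (d-2)⁻¹⌉₊ : ℝ) + 1 := by linarith
        _ ≤ (n:ℝ) := by exact_mod_cast hn3
    have := Real.rpow_lt_rpow (Real.rpow_nonneg hBnn _) h' hd2
    rwa [← Real.rpow_mul hBnn, inv_mul_cancel₀ (ne_of_gt hd2),
      Real.rpow_one] at this
  have hMn : N ≤ M₁ * n := le_trans hnN (Nat.le_mul_of_pos_left n hM₁)
  set L : ℕ := ℓ (M₁ * n) with hL
  have step1 : (n:ℝ) ^ d ≤ (K₁ : ℝ) * D (M₁ * n) := h1 n hn1
  have step2 : D (M₁ * n) ≤ C * ((M₁ * n : ℕ) : ℝ) ^ 2 * D L := hrec _ hMn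
  have hcast : ((M₁ * n : ℕ) : ℝ) = (M₁ : ℝ) * n := by push_cast; ring
  by_cases hcase : N₂ ≤ L
  · have step3 : D L ≤ (K₂ : ℝ) * ((M₂ * L : ℕ) : ℝ) ^ d := h2 _ hcase
    have hcast2 : ((M₂ * L : ℕ) : ℝ) = (M₂ : ℝ) * L := by push_cast; ring
    have hLnn : (0:ℝ) ≤ (L:ℝ) := Nat.cast_nonneg _
    have key : (n:ℝ) ^ d ≤ A * (n:ℝ) ^ 2 * (L:ℝ) ^ d := by
      have e1 : ((M₂ * L : ℕ) : ℝ) ^ d = (M₂:ℝ) ^ d * (L:ℝ) ^ d := by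
        rw [hcast2, Real.mul_rpow (le_of_lt hM₂R) hLnn]
      calc (n:ℝ) ^ d ≤ (K₁ : ℝ) * D (M₁ * n) := step1
        _ ≤ (K₁ : ℝ) * (C * ((M₁ * n : ℕ) : ℝ) ^ 2 * D L) := by
            apply mul_le_mul_of_nonneg_left step2 (le_of_lt hK₁R)
        _ ≤ (K₁ : ℝ) * (C * ((M₁ * n : ℕ) : ℝ) ^ 2 * ((K₂ : ℝ) * ((M₂ * L : ℕ) : ℝ) ^ d)) := by
            apply mul_le_mul_of_nonneg_left _ (le_of_lt hK₁R)
            apply mul_le_mul_of_nonneg_left step3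
            positivity
        _ = A * (n:ℝ) ^ 2 * (L:ℝ) ^ d := by
            rw [e1, hcast, hA]; ring
    -- divide by n^2
    have key2 : (n:ℝ) ^ (d - 2) ≤ A * (L:ℝ) ^ d := by
      have hn2pos : (0:ℝ) < (n:ℝ) ^ 2 := by positivity
      have : (n:ℝ) ^ (d - 2) * (n:ℝ) ^ 2 ≤ (A * (L:ℝ) ^ d) * (n:ℝ) ^ 2 := by
        have e : (n:ℝ) ^ (d - 2) * (n:ℝ) ^ 2 = (n:ℝ) ^ d := by
          rw [← Real.rpow_natCast (n:ℝ) 2, ← Real.rpow_add hnpos]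
          norm_num
        rw [e]; linarith [key]
      exact le_of_mul_le_mul_right this hn2pos
    -- take d-th roots
    have key3 : (n:ℝ) ^ ((d - 2) / d) ≤ A ^ d⁻¹ * (L:ℝ) := by
      have h' := Real.rpow_le_rpow (Real.rpow_nonneg (le_of_lt hnpos) _) key2
        (le_of_lt (inv_pos.mpr hdpos))
      have e1 : ((n:ℝ) ^ (d - 2)) ^ d⁻¹ = (n:ℝ) ^ ((d - 2) / d) := by
        rw [← Real.rpow_mul (le_of_lt hnpos), div_eq_mul_inv]
      have e2 : (A * (L:ℝ) ^ d) ^ d⁻¹ = A ^ d⁻¹ * (L:ℝ) := by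
        rw [Real.mul_rpow (le_of_lt hApos) (by positivity), ← Real.rpow_mul hLnn,
          mul_inv_cancel₀ (ne_of_gt hdpos), Real.rpow_one]
      rwa [e1, e2] at h'
    calc (n:ℝ) ^ ((d - 2) / d) ≤ A ^ d⁻¹ * (L:ℝ) := key3
      _ ≤ ((⌈A ^ d⁻¹⌉₊ + 1 : ℕ) : ℝ) * (L:ℝ) := by
          apply mul_le_mul_of_nonneg_right _ hLnn
          push_cast
          calc A ^ d⁻¹ ≤ (⌈A ^ d⁻¹⌉₊ : ℝ) := Nat.le_ceil _
            _ ≤ (⌈A ^ d⁻¹⌉₊ : ℝ) + 1 := by linarith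
  · exfalso
    have hDL : D L ≤ D N₂ := hDmono (le_of_not_ge hcase)
    have : (n:ℝ) ^ d ≤ B * (n:ℝ) ^ 2 := by
      calc (n:ℝ) ^ d ≤ (K₁ : ℝ) * D (M₁ * n) := step1
        _ ≤ (K₁ : ℝ) * (C * ((M₁ * n : ℕ) : ℝ) ^ 2 * D L) := by
            apply mul_le_mul_of_nonneg_left step2 (le_of_lt hK₁R)
        _ ≤ (K₁ : ℝ) * (C * ((M₁ * n : ℕ) : ℝ) ^ 2 * D N₂) := by
            apply mul_le_mul_of_nonneg_left _ (le_of_lt hK₁R)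
            apply mul_le_mul_of_nonneg_left hDL
            positivity
        _ ≤ B * (n:ℝ) ^ 2 := by
            rw [hcast, hB]
            have h1 : (1:ℝ) ≤ (M₁:ℝ) := by exact_mod_cast hM₁
            have := hDnn N₂
            nlinarith [sq_nonneg ((M₁:ℝ) * n), sq_nonneg (n:ℝ)]
    have hgt : B * (n:ℝ) ^ 2 < (n:ℝ) ^ d := by
      have e : (n:ℝ) ^ d = (n:ℝ) ^ (d - 2) * (n:ℝ) ^ 2 := by
        rw [← Real.rpow_natCast (n:ℝ) 2, ← Real.rpow_add hnpos]; norm_num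
      rw [e]
      have hn2pos : (0:ℝ) < (n:ℝ) ^ 2 := by positivity
      exact mul_lt_mul_of_pos_right hBlt hn2pos
    linarith
end

section
/- Let G be a finitely generated group of exponential growth with symmetric generating set S, so that the ball B_n of radius n satisfies #B_n ≥ λⁿ for all n ≥ n₀ and some λ > 1. Let ψ : L → G be any bijection from a language L ⊆ S* to G. Then with λ₁ = (1/2)·log_{|S|}(λ), the proportion of elements g ∈ B_n whose representative w = ψ⁻¹(g) satisfies |w| ≥ λ₁·d_A(g) tends to 1 as n → ∞. -/
/-!
Every bad element `g ∈ Bₙ` is the image under `ψ` of a word over `S` of length `< λ₁ n`, so there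
are fewer than `|S| ^ (⌊λ₁ n⌋ + 1) ≤ |S| · √λ ^ n` of them, because `|S| ^ λ₁ = √λ`. Against
`#Bₙ ≥ λ ^ n` the bad proportion is at most `|S| · (√λ / λ) ^ n → 0`.
-/

open Filter

/-- The word length of `g` with respect to the symmetric generating set `S`. -/
noncomputable def wordLen {G : Type*} [Group G] (S : Set G) (g : G) : ℕ :=
  sInf {k | ∃ l : List G, (∀ a ∈ l, a ∈ S) ∧ l.prod = g ∧ l.length = k}

open Topology

section Words

variable {α : Type*}

theorem List.ncard_setOf_length_lt_lt [Fintype α] (hα : 2 ≤ Fintype.card α) (k : ℕ) :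
    {l : List α | l.length < k}.ncard < Fintype.card α ^ k := by
  induction k with
  | zero => simp
  | succ k ih =>
    have hsplit : {l : List α | l.length < k + 1} = {l | l.length < k} ∪ {l | l.length = k} := by
      ext l
      simp [le_iff_lt_or_eq]
    have hexact : {l : List α | l.length = k}.ncard = Fintype.card α ^ k :=
      (Nat.card_eq_fintype_card (α := List.Vector α k)).trans (card_vector k)
    calc {l : List α | l.length < k + 1}.ncard
        ≤ {l : List α | l.length < k}.ncard + {l : List α | l.length = k}.ncard :=
          hsplit ▸ Set.ncard_union_le _ _
      _ < Fintype.card α ^ k + Fintype.card α ^ k := by omega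
      _ ≤ Fintype.card α ^ (k + 1) := by rw [pow_succ]; nlinarith

theorem List.setOf_forall_mem_length_lt_eq_image (s : Finset α) (k : ℕ) :
    {l : List α | (∀ a ∈ l, a ∈ s) ∧ l.length < k} =
      List.map Subtype.val '' {l : List s | l.length < k} := by
  ext l
  constructor
  · rintro ⟨hl, hlen⟩
    lift l to List s using hl
    exact ⟨l, by simpa using hlen, rfl⟩
  · rintro ⟨l, hlen, rfl⟩
    exact ⟨fun a ha => by obtain ⟨b, -, rfl⟩ := List.mem_map.1 ha; exact b.2, by simpa using hlen⟩

theorem List.finite_setOf_forall_mem_length_lt (s : Finset α) (k : ℕ) :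
    {l : List α | (∀ a ∈ l, a ∈ s) ∧ l.length < k}.Finite := by
  rw [List.setOf_forall_mem_length_lt_eq_image]
  exact (List.finite_length_lt s k).image _

theorem List.ncard_setOf_forall_mem_length_lt_lt (s : Finset α) (hs : 2 ≤ s.card) (k : ℕ) :
    {l : List α | (∀ a ∈ l, a ∈ s) ∧ l.length < k}.ncard < s.card ^ k := by
  rw [List.setOf_forall_mem_length_lt_eq_image,
    Set.ncard_image_of_injective _ (List.map_injective_iff.mpr Subtype.val_injective)]
  simpa using List.ncard_setOf_length_lt_lt (α := s) (by simpa using hs) k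

end Words

section Counting

variable {α G : Type*}

theorem diff_subset_image_length_lt (L : Set (List α)) (ψ : L → G) (d : G → ℕ)
    {μ : ℝ} (hμ : 0 ≤ μ) (n : ℕ) :
    {g | d g ≤ n} \ {g | d g ≤ n ∧ ∀ w : L, ψ w = g → μ * d g ≤ (w : List α).length} ⊆
      ψ '' {w | (w : List α).length < ⌊μ * n⌋₊ + 1} := by
  rintro g ⟨hg, hbad⟩
  obtain ⟨w, rfl, hw⟩ : ∃ w : L, ψ w = g ∧ ((w : List α).length : ℝ) < μ * d g := by
    by_contra! hgood
    exact hbad ⟨hg, hgood⟩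
  refine ⟨w, Nat.lt_succ_of_le (Nat.le_floor ?_), rfl⟩
  exact hw.le.trans (mul_le_mul_of_nonneg_left (by exact_mod_cast hg) hμ)

theorem ncard_diff_lt_pow (S : Finset α) (hS : 2 ≤ S.card) (L : Set (List α))
    (hL : ∀ w ∈ L, ∀ a ∈ w, a ∈ S) (ψ : L → G) (d : G → ℕ) {μ : ℝ} (hμ : 0 ≤ μ) (n : ℕ) :
    ({g | d g ≤ n} \ {g | d g ≤ n ∧ ∀ w : L, ψ w = g → μ * d g ≤ (w : List α).length}).ncard <
      S.card ^ (⌊μ * n⌋₊ + 1) := by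
  set k := ⌊μ * n⌋₊ + 1
  set W : Set L := {w | (w : List α).length < k}
  have hWS : Subtype.val '' W ⊆ {l : List α | (∀ a ∈ l, a ∈ S) ∧ l.length < k} := by
    rintro _ ⟨w, hw, rfl⟩
    exact ⟨hL w w.2, hw⟩
  have hWfin : W.Finite :=
    Set.Finite.of_finite_image ((List.finite_setOf_forall_mem_length_lt S k).subset hWS)
      Subtype.val_injective.injOn
  calc _ ≤ (ψ '' W).ncard :=
        Set.ncard_le_ncard (diff_subset_image_length_lt L ψ d hμ n) (hWfin.image ψ)
    _ ≤ W.ncard := Set.ncard_image_le hWfin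
    _ = (Subtype.val '' W).ncard := (Set.ncard_image_of_injective W Subtype.val_injective).symm
    _ ≤ _ := Set.ncard_le_ncard hWS (List.finite_setOf_forall_mem_length_lt S k)
    _ < _ := List.ncard_setOf_forall_mem_length_lt_lt S hS k

end Counting

theorem Real.rpow_half_logb {c x : ℝ} (hc : 0 < c) (hc₁ : c ≠ 1) (hx : 0 < x) :
    c ^ (1 / 2 * Real.logb c x) = √x := by
  rw [mul_comm, Real.rpow_mul hc.le, Real.rpow_logb hc hc₁ hx, Real.sqrt_eq_rpow]

theorem Real.pow_floor_half_logb_le {c x : ℝ} (hc : 1 < c) (hx : 1 ≤ x) (n : ℕ) :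
    c ^ (⌊1 / 2 * Real.logb c x * n⌋₊ + 1) ≤ c * √x ^ n := by
  have hexp : 0 ≤ 1 / 2 * Real.logb c x * n := by
    have := Real.logb_nonneg hc hx
    positivity
  calc c ^ (⌊1 / 2 * Real.logb c x * n⌋₊ + 1)
      = c * c ^ ((⌊1 / 2 * Real.logb c x * n⌋₊ : ℕ) : ℝ) := by
        rw [pow_succ', Real.rpow_natCast]
    _ ≤ c * c ^ (1 / 2 * Real.logb c x * n) := by
        gcongr
        · exact hc.le
        · exact Nat.floor_le hexp
    _ = c * √x ^ n := by
        rw [Real.rpow_mul_natCast (by positivity),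
          Real.rpow_half_logb (by positivity) hc.ne' (by positivity)]

theorem tendsto_div_of_le_geometric {a b : ℕ → ℝ} {C μ ν : ℝ} (hμ : 0 ≤ μ) (hμν : μ < ν)
    (ha₀ : ∀ n, 0 ≤ a n) (ha : ∀ n, a n ≤ C * μ ^ n) (hb : ∀ᶠ n in atTop, ν ^ n ≤ b n) :
    Tendsto (fun n => a n / b n) atTop (𝓝 0) := by
  have hν : 0 < ν := hμ.trans_lt hμν
  have hgeom : Tendsto (fun n : ℕ => C * (μ / ν) ^ n) atTop (𝓝 0) := by
    simpa using (tendsto_pow_atTop_nhds_zero_of_lt_one (by positivity)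
      ((div_lt_one hν).2 hμν)).const_mul C
  refine tendsto_of_tendsto_of_tendsto_of_le_of_le' tendsto_const_nhds hgeom ?_ ?_
  · filter_upwards [hb] with n hn
    exact div_nonneg (ha₀ n) ((pow_pos hν n).le.trans hn)
  · filter_upwards [hb] with n hn
    calc a n / b n ≤ a n / ν ^ n := div_le_div_of_nonneg_left (ha₀ n) (pow_pos hν n) hn
      _ ≤ C * μ ^ n / ν ^ n := by gcongr; exact ha n
      _ = C * (μ / ν) ^ n := by rw [div_pow, mul_div_assoc]

theorem tendsto_ncard_div_ncard_of_tendsto_diff {β : Type*} {A B : ℕ → Set β}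
    (hAB : ∀ n, A n ⊆ B n) (hB : ∀ᶠ n in atTop, (B n).ncard ≠ 0)
    (h : Tendsto (fun n => ((B n \ A n).ncard : ℝ) / (B n).ncard) atTop (𝓝 0)) :
    Tendsto (fun n => ((A n).ncard : ℝ) / (B n).ncard) atTop (𝓝 1) := by
  have hcompl : ∀ᶠ n in atTop, 1 - ((B n \ A n).ncard : ℝ) / (B n).ncard =
      ((A n).ncard : ℝ) / (B n).ncard := by
    filter_upwards [hB] with n hn
    have hsum : ((B n \ A n).ncard : ℝ) + (A n).ncard = (B n).ncard := by
      exact_mod_cast Set.ncard_sdiff_add_ncard_of_subset (hAB n) (Set.finite_of_ncard_ne_zero hn)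
    have hn' : ((B n).ncard : ℝ) ≠ 0 := by exact_mod_cast hn
    field_simp
    linarith
  simpa using (tendsto_const_nhds.sub h).congr' hcompl

theorem almost_all_linear_lower_bound_general
    {G : Type*} [Group G] (S : Finset G)
    (hcard : 2 ≤ S.card)
    (L : Set (List G)) (hL : ∀ w ∈ L, ∀ a ∈ w, a ∈ S)
    (ψ : L → G)
    (lam : ℝ) (hlam : 1 < lam) (n₀ : ℕ)
    (hgrowth : ∀ n, n₀ ≤ n →
      lam ^ n ≤ (({g : G | wordLen (S : Set G) g ≤ n}).ncard : ℝ)) :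
    Tendsto
      (fun n : ℕ =>
        (({g : G | wordLen (S : Set G) g ≤ n ∧ ∀ w : L, ψ w = g →
            (1 / 2 * Real.logb S.card lam) * (wordLen (S : Set G) g : ℝ) ≤
              ((w : List G).length : ℝ)}).ncard : ℝ) /
          (({g : G | wordLen (S : Set G) g ≤ n}).ncard : ℝ))
      atTop (nhds 1) := by
  have hc : (1 : ℝ) < S.card := by exact_mod_cast hcard
  have hgrowth' : ∀ᶠ n in atTop, lam ^ n ≤ (({g : G | wordLen (S : Set G) g ≤ n}).ncard : ℝ) :=
    eventually_atTop.2 ⟨n₀, hgrowth⟩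
  refine tendsto_ncard_div_ncard_of_tendsto_diff (fun n g hg => hg.1) ?_ ?_
  · filter_upwards [hgrowth'] with n hn
    exact_mod_cast ((pow_pos (zero_lt_one.trans hlam) n).trans_le hn).ne'
  refine tendsto_div_of_le_geometric (C := S.card) (Real.sqrt_nonneg lam)
    (Real.sqrt_lt_self_iff.2 hlam) (fun n => Nat.cast_nonneg _) (fun n => ?_) hgrowth'
  have hμ : 0 ≤ 1 / 2 * Real.logb S.card lam := by
    have := Real.logb_nonneg hc hlam.le
    positivity
  calc _ ≤ ((S.card ^ (⌊1 / 2 * Real.logb S.card lam * n⌋₊ + 1) : ℕ) : ℝ) := by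
        exact_mod_cast (ncard_diff_lt_pow S hcard L hL ψ _ hμ n).le
    _ ≤ _ := by
        push_cast
        exact Real.pow_floor_half_logb_le hc hlam.le n

/-- Let `G` be a finitely generated group of exponential growth with finite
symmetric generating set `S` (`#Bₙ ≥ λⁿ` for `n ≥ n₀`, `λ > 1`), and let
`ψ : L → G` be any bijection from a language `L ⊆ S*` to `G`.  Then, with
`λ₁ = (1/2) · log_{|S|} λ`, the proportion of elements `g ∈ Bₙ` whose
representative `w = ψ⁻¹ g` satisfies `|w| ≥ λ₁ · d_A g` tends to `1`. -/
theorem almost_all_linear_lower_bound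
    {G : Type*} [Group G] (S : Finset G)
    (hsym : ∀ a ∈ S, a⁻¹ ∈ S) (hcard : 2 ≤ S.card)
    (hgen : Subgroup.closure (S : Set G) = ⊤)
    (L : Set (List G)) (hL : ∀ w ∈ L, ∀ a ∈ w, a ∈ S)
    (ψ : L → G) (hψ : Function.Bijective ψ)
    (lam : ℝ) (hlam : 1 < lam) (n₀ : ℕ)
    (hgrowth : ∀ n, n₀ ≤ n →
      lam ^ n ≤ (({g : G | wordLen (S : Set G) g ≤ n}).ncard : ℝ)) :
    Tendsto
      (fun n : ℕ =>
        (({g : G | wordLen (S : Set G) g ≤ n ∧ ∀ w : L, ψ w = g →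
            (1 / 2 * Real.logb S.card lam) * (wordLen (S : Set G) g : ℝ) ≤
              ((w : List G).length : ℝ)}).ncard : ℝ) /
          (({g : G | wordLen (S : Set G) g ≤ n}).ncard : ℝ))
      atTop (nhds 1) :=
  almost_all_linear_lower_bound_general S hcard L hL ψ lam hlam n₀ hgrowth
end
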